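/- arXiv:1210.0865 — 5 statements merged into one kernel-verified Lean document; each statement's English description precedes it below -/
import Mathlib

section
/- Fix a rotation scheme ε_L, ε_R : ZMod 3 → ℤˣ such that value(ε_L) = 3 and value(ε_R) = 3 (i.e. all three orientations in each part agree). Then the face-tracing permutation F(ε_L, ε_R) on the 18-element dart type D has exactly 3 orbits, and every orbit has cardinality 6 (the [6+6+6]-type embedding of K_{3,3} in the torus). -/
/-- The dart type of `K_{3,3}`: `(i, j, true)` is the directed edge from left-vertex `i`
to right-vertex `j`, and `(i, j, false)` the directed edge from right-vertex `j`
to left-vertex `i`. -/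
abbrev Dart : Type := ZMod 3 × ZMod 3 × Bool

/-- The value of an orientation `ε : ZMod 3 → ℤˣ`: the absolute value of the
sum of the orientations `±1` of the three vertices of one part of `K_{3,3}`. -/
def value (ε : ZMod 3 → ℤˣ) : ℕ := (∑ i : ZMod 3, (ε i : ℤ)).natAbs

/-- The face-tracing permutation of the darts of `K_{3,3}` determined by the
rotation scheme `(εL, εR)`, implementing the rotation rule. -/
def faceTracing (εL εR : ZMod 3 → ℤˣ) : Equiv.Perm Dart where
  toFun := fun d => match d with
    | (i, j, true) => (i + ((εR j : ℤ) : ZMod 3), j, false)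
    | (i, j, false) => (i, j + ((εL i : ℤ) : ZMod 3), true)
  invFun := fun d => match d with
    | (i, j, false) => (i - ((εR j : ℤ) : ZMod 3), j, true)
    | (i, j, true) => (i, j - ((εL i : ℤ) : ZMod 3), false)
  left_inv := by rintro ⟨i, j, _ | _⟩ <;> simp
  right_inv := by rintro ⟨i, j, _ | _⟩ <;> simp


lemma valsum (ε : ZMod 3 → ℤˣ) : value ε = ((ε 0 : ℤ) + ε 1 + ε 2).natAbs := by
  rw [value, show (Finset.univ : Finset (ZMod 3)) = {0, 1, 2} by decide]
  rw [Finset.sum_insert (by decide), Finset.sum_insert (by decide), Finset.sum_singleton,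
    add_assoc]

lemma const_of_value (ε : ZMod 3 → ℤˣ) (h : value ε = 3) :
    (ε = fun _ => 1) ∨ (ε = fun _ => -1) := by
  rcases Int.units_eq_one_or (ε 0) with h0 | h0 <;>
  rcases Int.units_eq_one_or (ε 1) with h1 | h1 <;>
  rcases Int.units_eq_one_or (ε 2) with h2 | h2 <;>
  rw [valsum, h0, h1, h2] at h <;>
  first
  | (left; funext i; fin_cases i <;> assumption)
  | (right; funext i; fin_cases i <;> assumption)
  | simp at h

open MulAction Subgroup Function in
lemma aux_main (f : Equiv.Perm Dart)
    (h1 : ∀ d : Dart, f^[1] d ≠ d)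
    (h2 : ∀ d : Dart, f^[2] d ≠ d)
    (h3 : ∀ d : Dart, f^[3] d ≠ d)
    (h6 : ∀ d : Dart, f^[6] d = d) :
    Nat.card (orbitRel.Quotient (zpowers f) Dart) = 3 ∧
    ∀ d : Dart, Nat.card (orbit (zpowers f) d) = 6 := by
  have hmp : ∀ d : Dart, Function.minimalPeriod (f • ·) d = 6 := by
    intro d
    have hper : IsPeriodicPt (f • ·) 6 d := h6 d
    have hdvd : minimalPeriod (f • ·) d ∣ 6 := hper.minimalPeriod_dvd
    have hpos : 0 < minimalPeriod (f • ·) d := hper.minimalPeriod_pos (by norm_num)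
    have hle : minimalPeriod (f • ·) d ≤ 6 := Nat.le_of_dvd (by norm_num) hdvd
    have hkey : IsPeriodicPt (f • ·) (minimalPeriod (f • ·) d) d :=
      isPeriodicPt_minimalPeriod _ _
    set m := minimalPeriod (f • ·) d with hm
    clear_value m
    interval_cases m
    · exact absurd hkey (h1 d)
    · exact absurd hkey (h2 d)
    · exact absurd hkey (h3 d)
    · exact absurd hdvd (by norm_num)
    · exact absurd hdvd (by norm_num)
    · rfl
  have hc : ∀ d : Dart, Nat.card (orbit (zpowers f) d) = 6 := by
    intro d
    rw [Nat.card_congr (orbitZPowersEquiv f d), hmp, Nat.card_zmod]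
  refine ⟨?_, hc⟩
  classical
  haveI : Fintype (orbitRel.Quotient (zpowers f) Dart) := Fintype.ofFinite _
  haveI : ∀ ω : orbitRel.Quotient (zpowers f) Dart,
      Fintype (orbit (zpowers f) ω.out) := fun ω => Fintype.ofFinite _
  have h18 : Fintype.card Dart = 18 := rfl
  rw [Fintype.card_congr (selfEquivSigmaOrbits (zpowers f) Dart), Fintype.card_sigma] at h18
  have horb : ∀ ω : orbitRel.Quotient (zpowers f) Dart,
      Fintype.card (orbit (zpowers f) ω.out) = 6 := fun ω => by
    rw [← Nat.card_eq_fintype_card]; exact hc ω.out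
  simp only [horb, Finset.sum_const, Finset.card_univ, smul_eq_mul] at h18
  rw [Nat.card_eq_fintype_card]
  omega

/-- If all three orientations in each part agree (both values are `3`), the
face-tracing permutation has exactly `3` orbits, each of cardinality `6`:
the `[6+6+6]`-type embedding of `K_{3,3}` in the torus. -/
theorem k33_value_three_three_orbits (εL εR : ZMod 3 → ℤˣ)
    (hL : value εL = 3) (hR : value εR = 3) :
    Nat.card (MulAction.orbitRel.Quotient (Subgroup.zpowers (faceTracing εL εR)) Dart) = 3 ∧
    ∀ d : Dart, Nat.card (MulAction.orbit (Subgroup.zpowers (faceTracing εL εR)) d) = 6 := by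
  rcases const_of_value εL hL with hEL | hEL <;> rcases const_of_value εR hR with hER | hER <;>
    subst hEL hER <;>
    exact aux_main _ (by decide) (by decide) (by decide) (by decide)
end

section
/- Fix a rotation scheme ε_L, ε_R : ZMod 3 → ℤˣ such that value(ε_L) ≠ value(ε_R). Then the face-tracing permutation F(ε_L, ε_R) has a single orbit: the orbit of every dart under iteration of F is the entire 18-element dart type D (the 18-type embedding of K_{3,3} in the double torus, with one face). -/
set_option maxHeartbeats 4000000 in
set_option maxRecDepth 10000 in
/-- By finite enumeration: every dart is reached from the base dart `(0,0,true)`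
within `18` steps of the face-tracing permutation. -/
lemma k33_key : ∀ (εL εR : ZMod 3 → ℤˣ), value εL ≠ value εR → ∀ e : Dart,
    ∃ n ∈ Finset.range 18, ((faceTracing εL εR) ^ n) (0, 0, true) = e := by decide

lemma k33_orbit_eq_univ_iff {α : Type*} (f : Equiv.Perm α) (d : α) :
    MulAction.orbit (Subgroup.zpowers f) d = Set.univ ↔ ∀ e, f.SameCycle d e := by
  rw [Set.eq_univ_iff_forall]
  apply forall_congr'
  intro e
  constructor
  · rintro ⟨⟨g, m, rfl⟩, rfl⟩
    exact ⟨m, rfl⟩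
  · rintro ⟨m, rfl⟩
    exact ⟨⟨f ^ m, m, rfl⟩, rfl⟩

/-- If the values of the two parts differ, the face-tracing permutation has a single
orbit: the orbit of every dart under iteration is all of the `18`-element dart type.
This is the `18`-type embedding of `K_{3,3}` in the double torus, with one face. -/
theorem k33_value_ne_single_orbit (εL εR : ZMod 3 → ℤˣ)
    (hne : value εL ≠ value εR) :
    ∀ d : Dart, MulAction.orbit (Subgroup.zpowers (faceTracing εL εR)) d = Set.univ := by
  have h : ∀ e : Dart, (faceTracing εL εR).SameCycle (0, 0, true) e := by
    intro e
    obtain ⟨n, -, hn⟩ := k33_key εL εR hne e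
    exact ⟨n, by exact_mod_cast hn⟩
  intro d
  rw [k33_orbit_eq_univ_iff]
  intro e
  exact (h d).symm.trans (h e)
end

section
/- For every rotation scheme ε_L, ε_R : ZMod 3 → ℤˣ, the number of orbits of the face-tracing permutation F(ε_L, ε_R) on the dart type D is either 3 or 1; equivalently, by Euler's formula f = 5 − 2h, the genus h of the cellular embedding of K_{3,3} determined by the rotation scheme is either 1 or 2. -/
/-!
The face-tracing permutation is the vertex rotation (whose cube is the identity, so it is even)
composed with the dart reversal (nine transpositions), so it is odd. As it moves every dart, its
sign is `(-1) ^ (18 + c)` with `c` the number of its cycles, so `c` is odd. Every face has even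
length, since darts alternate between the two sides, and no face has length `2`, since the
rotation at a vertex moves every neighbour. Hence the `18` darts form at most four faces.
-/

open MulAction Subgroup

namespace Equiv.Perm

variable {α : Type*}

theorem orbitRel_zpowers_iff {σ : Perm α} {x y : α} :
    orbitRel (zpowers σ) α x y ↔ σ.SameCycle y x := by
  constructor
  · rintro ⟨⟨_, i, rfl⟩, h⟩
    exact ⟨i, h⟩
  · rintro ⟨i, h⟩
    exact ⟨⟨σ ^ i, i, rfl⟩, h⟩

variable [Fintype α] [DecidableEq α]

theorem sign_eq_one_of_pow_eq_one_of_odd {σ : Perm α} {n : ℕ} (hn : Odd n)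
    (hσ : σ ^ n = 1) : sign σ = 1 := by
  have h := congrArg sign hσ
  rw [map_pow, map_one] at h
  rcases Int.units_eq_one_or (sign σ) with h' | h'
  · exact h'
  · rw [h', hn.neg_one_pow] at h
    exact absurd h (by decide)

theorem card_orbitRel_zpowers_eq_card_cycleType {σ : Perm α} (hσ : ∀ x, σ x ≠ x) :
    Nat.card (orbitRel.Quotient (zpowers σ) α) = Multiset.card σ.cycleType := by
  rw [cycleType_def, Multiset.card_map, ← Finset.card_def, ← Nat.card_eq_finsetCard]
  refine Nat.card_congr (Equiv.ofBijective (Quotient.lift (fun x => (⟨σ.cycleOf x,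
    cycleOf_mem_cycleFactorsFinset_iff.2 (mem_support.2 (hσ x))⟩ : σ.cycleFactorsFinset))
    fun x y h => Subtype.ext (orbitRel_zpowers_iff.1 h).cycleOf_eq.symm) ⟨?_, ?_⟩)
  · rintro ⟨x⟩ ⟨y⟩ h
    refine Quotient.sound (orbitRel_zpowers_iff.2 ?_)
    have hxy : σ.cycleOf x = σ.cycleOf y := congrArg Subtype.val h
    have hy : y ∈ (σ.cycleOf y).support :=
      mem_support_cycleOf_iff.2 ⟨.refl _ _, mem_support.2 (hσ y)⟩
    rw [← hxy] at hy
    exact (mem_support_cycleOf_iff.1 hy).1.symm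
  · rintro ⟨c, hc⟩
    obtain ⟨a, ha⟩ := (mem_cycleFactorsFinset_iff.1 hc).1.nonempty_support
    exact ⟨Quotient.mk _ a, Subtype.ext (cycle_is_cycleOf ha hc).symm⟩

theorem sign_eq_neg_one_pow_card_add_card_orbitRel_zpowers {σ : Perm α}
    (hσ : ∀ x, σ x ≠ x) :
    sign σ = (-1) ^ (Fintype.card α + Nat.card (orbitRel.Quotient (zpowers σ) α)) := by
  have hsupp : σ.support = Finset.univ := Finset.eq_univ_of_forall fun x => mem_support.2 (hσ x)
  rw [sign_of_cycleType, sum_cycleType, hsupp, Finset.card_univ,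
    card_orbitRel_zpowers_eq_card_cycleType hσ]

theorem le_of_mem_cycleType_of_pow_apply_ne {σ : Perm α} {m k : ℕ}
    (hσ : ∀ n, 0 < n → n < m → ∀ x, (σ ^ n) x ≠ x) (hk : k ∈ σ.cycleType) :
    m ≤ k := by
  obtain ⟨c, hc, rfl⟩ := Multiset.mem_map.1 hk
  obtain ⟨a, ha⟩ := (mem_cycleFactorsFinset_iff.1 hc).1.nonempty_support
  have hpow := pow_mod_card_support_cycleOf_self_apply σ (c.support.card) a
  rw [← cycle_is_cycleOf ha hc, Nat.mod_self, pow_zero, one_apply] at hpow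
  by_contra! hlt
  exact hσ _ (zero_lt_two.trans_le (two_le_of_mem_cycleType hk)) hlt a hpow.symm

theorem mul_card_orbitRel_zpowers_le {σ : Perm α} {m : ℕ} (hm : 1 < m)
    (hσ : ∀ n, 0 < n → n < m → ∀ x, (σ ^ n) x ≠ x) :
    m * Nat.card (orbitRel.Quotient (zpowers σ) α) ≤ Fintype.card α := by
  have hfix (x : α) : σ x ≠ x := by simpa using hσ 1 one_pos hm x
  rw [card_orbitRel_zpowers_eq_card_cycleType hfix, mul_comm]
  exact (Multiset.card_nsmul_le_sum fun k hk => le_of_mem_cycleType_of_pow_apply_ne hσ hk).trans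
    (sum_cycleType_le σ)

end Equiv.Perm

open Equiv Equiv.Perm

theorem units_intCast_zmod_three_ne_zero (u : ℤˣ) : ((u : ℤ) : ZMod 3) ≠ 0 := by
  rcases Int.units_eq_one_or u with rfl | rfl <;> decide

def dartReverse : Perm Dart := prodCongrRight fun _ => prodCongrRight fun _ => boolNot

def vertexRotation (εL εR : ZMod 3 → ℤˣ) : Perm Dart where
  toFun
    | (i, j, true) => (i, j + ((εL i : ℤ) : ZMod 3), true)
    | (i, j, false) => (i + ((εR j : ℤ) : ZMod 3), j, false)
  invFun
    | (i, j, true) => (i, j - ((εL i : ℤ) : ZMod 3), true)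
    | (i, j, false) => (i - ((εR j : ℤ) : ZMod 3), j, false)
  left_inv := by rintro ⟨i, j, _ | _⟩ <;> simp
  right_inv := by rintro ⟨i, j, _ | _⟩ <;> simp

theorem faceTracing_eq_vertexRotation_mul_dartReverse (εL εR : ZMod 3 → ℤˣ) :
    faceTracing εL εR = vertexRotation εL εR * dartReverse := by
  ext ⟨i, j, _ | _⟩ <;> rfl

theorem vertexRotation_pow_three (εL εR : ZMod 3 → ℤˣ) : vertexRotation εL εR ^ 3 = 1 := by
  have h : ∀ x u : ZMod 3, x + u + u + u = x := by decide
  ext ⟨i, j, _ | _⟩ <;> simp [pow_succ, vertexRotation, h]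

theorem sign_dartReverse : sign dartReverse = -1 := by
  have h : sign boolNot = -1 := by
    rw [show boolNot = swap false true by decide, sign_swap Bool.false_ne_true]
  simp only [dartReverse, sign_prodCongrRight, h, Finset.prod_const, Finset.card_univ, ZMod.card]
  decide

theorem faceTracing_pow_apply_ne (εL εR : ZMod 3 → ℤˣ) (n : ℕ) (hn : 0 < n) (hn4 : n < 4)
    (d : Dart) : (faceTracing εL εR ^ n) d ≠ d := by
  interval_cases n <;> obtain ⟨i, j, _ | _⟩ := d <;>
    simp [pow_succ, faceTracing, units_intCast_zmod_three_ne_zero]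

/-- For every rotation scheme, the number of orbits (faces) of the face-tracing
permutation on the darts of `K_{3,3}` is either `3` or `1`; equivalently, by Euler's
formula `f = 5 - 2h`, the genus `h` of the corresponding cellular embedding of
`K_{3,3}` is either `1` or `2`. -/
theorem k33_faces_three_or_one (εL εR : ZMod 3 → ℤˣ) :
    (Nat.card (MulAction.orbitRel.Quotient (Subgroup.zpowers (faceTracing εL εR)) Dart) = 3 ∨
      Nat.card (MulAction.orbitRel.Quotient (Subgroup.zpowers (faceTracing εL εR)) Dart) = 1) ∧
    ∀ h : ℕ,
      (Nat.card (MulAction.orbitRel.Quotient (Subgroup.zpowers (faceTracing εL εR)) Dart) : ℤ) =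
        5 - 2 * h → (h = 1 ∨ h = 2) := by
  set faces := Nat.card (orbitRel.Quotient (zpowers (faceTracing εL εR)) Dart)
  have hfix (d : Dart) : faceTracing εL εR d ≠ d := by
    simpa using faceTracing_pow_apply_ne εL εR 1 one_pos (by norm_num) d
  have hodd : Odd (Fintype.card Dart + faces) := by
    rw [← neg_one_pow_eq_neg_one_iff_odd (R := ℤˣ) (by decide),
      ← sign_eq_neg_one_pow_card_add_card_orbitRel_zpowers hfix,
      faceTracing_eq_vertexRotation_mul_dartReverse, map_mul,
      sign_eq_one_of_pow_eq_one_of_odd ⟨1, rfl⟩ (vertexRotation_pow_three εL εR),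
      sign_dartReverse, one_mul]
  have hle : 4 * faces ≤ Fintype.card Dart :=
    mul_card_orbitRel_zpowers_le (by norm_num) (faceTracing_pow_apply_ne εL εR)
  have hpos : 0 < faces := Nat.card_pos
  have hcard : Fintype.card Dart = 18 := rfl
  have hfaces : faces = 3 ∨ faces = 1 := by
    obtain ⟨k, hk⟩ := hodd
    omega
  exact ⟨hfaces, fun h hh => by omega⟩
end

section
/- For every rotation scheme ε_L, ε_R : ZMod 3 → ℤˣ, the multiset of orbit cardinalities of the face-tracing permutation F(ε_L, ε_R) on the dart type D is never equal to {4, 6, 8}: the partition 4+6+8 of 18 is not realized by any cellular embedding of K_{3,3}. -/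
open scoped Classical in
/-- The multiset of orbit cardinalities of a permutation `f` of the darts of `K_{3,3}`:
one entry, the cardinality of the orbit, for each orbit of `f` under iteration. -/
noncomputable def orbitSizes (f : Equiv.Perm Dart) : Multiset ℕ :=
  (Finset.univ : Finset (MulAction.orbitRel.Quotient (Subgroup.zpowers f) Dart)).val.map
    fun q => Nat.card q.orbit

set_option maxHeartbeats 4000000 in
/-- Key finite verification: if a dart returns to itself after 8 steps of the
face-tracing permutation, it already returns after 4 steps.  Hence no face has
length exactly 8. -/
lemma step : ∀ (εL εR : ZMod 3 → ℤˣ) (d : Dart),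
    (⇑(faceTracing εL εR))^[8] d = d → (⇑(faceTracing εL εR))^[4] d = d := by decide

/-- For every rotation scheme, the multiset of orbit cardinalities of the face-tracing
permutation on the darts of `K_{3,3}` is never `{4, 6, 8}`: the partition `4+6+8` of
`18` is not realized by any cellular embedding of `K_{3,3}`. -/
theorem k33_no_four_six_eight (εL εR : ZMod 3 → ℤˣ) :
    orbitSizes (faceTracing εL εR) ≠ {4, 6, 8} := by
  classical
  intro h
  set F := faceTracing εL εR
  have h8 : (8 : ℕ) ∈ orbitSizes F := by rw [h]; simp
  obtain ⟨q, -, hq⟩ := Multiset.mem_map.mp h8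
  set d : Dart := q.out
  have horb : q.orbit = MulAction.orbit (Subgroup.zpowers F) d :=
    MulAction.orbitRel.Quotient.orbit_eq_orbit_out q Quotient.out_eq'
  have hcard : Function.minimalPeriod (F • ·) d = 8 := by
    have := Nat.card_congr (MulAction.orbitZPowersEquiv F d)
    rw [Nat.card_zmod] at this
    rw [← this, ← horb, hq]
  have hper : (⇑F)^[8] d = d := by
    have := Function.iterate_minimalPeriod (f := (F • ·)) (x := d)
    rw [hcard] at this
    exact this
  have h4 : Function.IsPeriodicPt (⇑F) 4 d := step εL εR d hper
  have hle : Function.minimalPeriod (⇑F) d ≤ 4 := h4.minimalPeriod_le (by norm_num)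
  have : Function.minimalPeriod (F • ·) d = Function.minimalPeriod (⇑F) d := rfl
  omega
end

section
/- Relabelling the right-hand vertices of K_{3,3} by an affine bijection conjugates one face-tracing permutation into another whose orientation values are unchanged: for any a ∈ ℤˣ and b ∈ ZMod 3, let φ : ZMod 3 ≃ ZMod 3 be the bijection φ j = (a : ℤ) • j + b, and let R_φ : D ≃ D be the dart relabelling R_φ (i, j, t) = (i, φ j, t). Then R_φ ∘ F(ε_L, ε_R) ∘ R_φ⁻¹ = F(a • ε_L, ε_R ∘ φ⁻¹), where a • ε_L denotes the pointwise product i ↦ a * ε_L i. In particular the cycle type of the face-tracing permutation depends only on the pair of values of ε_L and ε_R. -/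
/-!
Relabelling the right-hand vertices merely moves the right rotations along `φ`, and at
a left vertex `i` it turns the step `j ↦ j + εL i` into `φ j ↦ φ (j + εL i)`; since `φ`
is affine with linear part `a`, this is the step `φ j ↦ φ j + a εL i`. Conjugate
permutations have the same cycle type.
-/

theorem affine_apply_add {M : Type*} [AddCommGroup M] {φ : M → M} {n : ℤ} {b : M}
    (hφ : ∀ j, φ j = n • j + b) (j c : M) : φ (j + c) = φ j + n • c := by
  rw [hφ, hφ, smul_add, add_right_comm]

def relabelRight (ψ : Equiv.Perm (ZMod 3)) : Equiv.Perm Dart :=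
  (Equiv.refl _).prodCongr (ψ.prodCongr (Equiv.refl _))

theorem relabelRight_apply (ψ : Equiv.Perm (ZMod 3)) (d : Dart) :
    relabelRight ψ d = (d.1, ψ d.2.1, d.2.2) := rfl

theorem relabelRight_mul_faceTracing_mul_inv (ψ : Equiv.Perm (ZMod 3))
    {εL εL' : ZMod 3 → ℤˣ} (εR : ZMod 3 → ℤˣ)
    (h : ∀ i j, ψ (j + ((εL i : ℤ) : ZMod 3)) = ψ j + ((εL' i : ℤ) : ZMod 3)) :
    relabelRight ψ * faceTracing εL εR * (relabelRight ψ)⁻¹ =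
      faceTracing εL' (fun j => εR (ψ.symm j)) := by
  ext ⟨i, j, _ | _⟩ <;> simp [relabelRight, faceTracing, h]

theorem relabelRight_affine_mul_faceTracing_mul_inv (εL εR : ZMod 3 → ℤˣ) (a : ℤˣ)
    (b : ZMod 3) (φ : Equiv.Perm (ZMod 3)) (hφ : ∀ j : ZMod 3, φ j = (a : ℤ) • j + b) :
    relabelRight φ * faceTracing εL εR * (relabelRight φ)⁻¹ =
      faceTracing (fun i => a * εL i) (fun j => εR (φ.symm j)) :=
  relabelRight_mul_faceTracing_mul_inv φ εR fun i j => by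
    rw [affine_apply_add hφ, zsmul_eq_mul]
    push_cast
    rfl

/-- Relabelling the right-hand vertices of `K_{3,3}` by the affine bijection
`φ j = a • j + b` conjugates the face-tracing permutation of the scheme `(εL, εR)`
into the face-tracing permutation of the scheme `(a • εL, εR ∘ φ⁻¹)`, whose
orientation values are unchanged; in particular the cycle type of the face-tracing
permutation is unchanged. -/
theorem k33_relabel_conj (εL εR : ZMod 3 → ℤˣ) (a : ℤˣ) (b : ZMod 3)
    (φ : ZMod 3 ≃ ZMod 3) (hφ : ∀ j : ZMod 3, φ j = (a : ℤ) • j + b)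
    (Rφ : Equiv.Perm Dart) (hR : ∀ d : Dart, Rφ d = (d.1, φ d.2.1, d.2.2)) :
    Rφ * faceTracing εL εR * Rφ⁻¹ =
      faceTracing (fun i => a * εL i) (fun j => εR (φ.symm j)) ∧
    (faceTracing (fun i => a * εL i) (fun j => εR (φ.symm j))).cycleType =
      (faceTracing εL εR).cycleType := by
  obtain rfl : Rφ = relabelRight φ :=
    Equiv.ext fun d => (hR d).trans (relabelRight_apply φ d).symm
  have hconj := relabelRight_affine_mul_faceTracing_mul_inv εL εR a b φ hφ
  exact ⟨hconj, by rw [← hconj, Equiv.Perm.cycleType_conj]⟩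
end
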